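/- Let F be a network computation problem over F_q with K source messages in which every sink t ∈ T demands a linear function g_t(X) = X·g_t. If the network N is matroidal with respect to a matroid M that is representable over F_q, with a representation M ∈ F_q^{m×n} (m ≥ K, n ≥ m, rank(M) = m) satisfying (C1) in the columns f(X_1), …, f(X_K) and (C2) in the columns f(g_{t_1}), …, f(g_{t_{|T|}}), where f is the network-matroid map, then F admits a scalar linear solution over F_q; indeed, assigning to each edge e ∈ Ẽ ∪ E the truncation to the first K coordinates of the column M_{f(e)} as its global encoding vector yields, together with suitable linear decoders D_t at the sinks, a scalar linear solution satisfying every sink demand. -/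

import Mathlib

attribute [local instance 10] Classical.propDecidable

/-- Acyclicity of a finite directed multigraph: there is no (nonempty) closed directed
walk of edges, i.e. no directed cycle. -/
def EdgeAcyclic {V E : Type} (tail head : E → V) : Prop :=
  ∀ (n : ℕ) (c : Fin (n + 1) → E), ¬ (∀ i : Fin (n + 1), head (c i) = tail (c (i + 1)))

/-- The edge set `𝓔 = Ẽ ∪ E ∪ Ê` of a network computation problem with `K` source
edges (`Fin K`), ordinary edges `E` and demand edges (one per sink in `T`) is modelled
as the sum type `Fin K ⊕ E ⊕ T`.

`inF v` is the set `In(v)`: source edges terminating at `v` together with ordinary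
edges with head `v`. -/
def inF (V E T : Type) (K : ℕ) [Fintype V] [DecidableEq V] [Fintype E] [DecidableEq E]
    [Fintype T] [DecidableEq T] (head : E → V) (srcNode : Fin K → V) (v : V) :
    Finset (Fin K ⊕ E ⊕ T) :=
  ((Finset.univ.filter fun k : Fin K => srcNode k = v).image fun k => Sum.inl k) ∪
    ((Finset.univ.filter fun e : E => head e = v).image fun e => Sum.inr (Sum.inl e))

/-- `outF v` is the set `Out(v)`: ordinary edges with tail `v` together with the demand
edges of the sinks located at `v`. -/
def outF (V E T : Type) (K : ℕ) [Fintype V] [DecidableEq V] [Fintype E] [DecidableEq E]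
    [Fintype T] [DecidableEq T] (tail : E → V) (sinkNode : T → V) (v : V) :
    Finset (Fin K ⊕ E ⊕ T) :=
  ((Finset.univ.filter fun e : E => tail e = v).image fun e => Sum.inr (Sum.inl e)) ∪
    ((Finset.univ.filter fun t : T => sinkNode t = v).image fun t => Sum.inr (Sum.inr t))

/-- A matroid on a ground set `S`, given by its rank function satisfying the rank
axioms (R1)–(R3). -/
structure FinMatroid (S : Type) where
  rk : Finset S → ℕ
  rk_le_card : ∀ A : Finset S, rk A ≤ A.card
  rk_mono : ∀ ⦃A B : Finset S⦄, A ⊆ B → rk A ≤ rk B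
  rk_submodular : ∀ A B : Finset S, rk (A ∪ B) + rk (A ∩ B) ≤ rk A + rk B

/-- The rank of the submatrix of `Mat` consisting of the columns indexed by `A`. -/
noncomputable def colRank (F : Type) [Field F] {m n : ℕ} (Mat : Matrix (Fin m) (Fin n) F)
    (A : Finset (Fin n)) : ℕ :=
  (Matrix.of fun (i : Fin m) (a : {x // x ∈ A}) => Mat i a.1).rank

/-- `Mat` (an `m × n` matrix) together with the bijection `φ` from the ground set to the
column indices is a representation of the matroid `M` over `F`: for every subset `A` of
the ground set, the rank of the corresponding columns equals `M.rk A`. -/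
def IsRepresentation (F : Type) [Field F] {S : Type} (M : FinMatroid S) {m n : ℕ}
    (Mat : Matrix (Fin m) (Fin n) F) (φ : S ≃ Fin n) : Prop :=
  ∀ A : Finset S, colRank F Mat (A.image φ) = M.rk A

/-- A network-matroid map for the network computation problem: a map from
`𝒳 ∪ E ∪ G_T` (identified with the edges `Ẽ ∪ E ∪ Ê`) to the ground set of the matroid
satisfying (M1) (injective on the source messages), (M2) (the image of the source
messages is independent) and (M3) (`r(f(In(v))) = r(f(In(v) ∪ Out(v)))` for all `v`). -/
def IsNetworkMatroidMap (F V E T : Type) [Field F] [Fintype V] [DecidableEq V]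
    [Fintype E] [DecidableEq E] [Fintype T] [DecidableEq T] (K : ℕ)
    (tail head : E → V) (srcNode : Fin K → V) (sinkNode : T → V)
    {S : Type} (M : FinMatroid S) (f : Fin K ⊕ E ⊕ T → S) : Prop :=
  Function.Injective (fun k : Fin K => f (Sum.inl k)) ∧
  M.rk (Finset.univ.image fun k : Fin K => f (Sum.inl k)) =
      (Finset.univ.image fun k : Fin K => f (Sum.inl k)).card ∧
  ∀ v : V,
    M.rk ((inF V E T K head srcNode v).image f) =
      M.rk ((inF V E T K head srcNode v ∪ outF V E T K tail sinkNode v).image f)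

/-- The family `Fv` of global encoding vectors (one per edge of `𝓔`) is a scalar linear
solution for the network computation problem with linear demands `g`: source edges get
the standard basis vectors, demand edges get the demand vectors, the vector of every
outgoing edge of a node `v` is an `F`-linear combination of the vectors of `In(v)`, and
every sink has a linear decoder recovering its demand. -/
def IsLinearCodeSolution (F V E T : Type) [Field F] [Fintype V] [DecidableEq V]
    [Fintype E] [DecidableEq E] [Fintype T] [DecidableEq T] (K : ℕ)
    (tail head : E → V) (srcNode : Fin K → V) (sinkNode : T → V)
    (g : T → Fin K → F) (Fv : Fin K ⊕ E ⊕ T → Fin K → F) : Prop :=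
  (∀ k : Fin K, Fv (Sum.inl k) = fun j => if j = k then (1 : F) else 0) ∧
  (∀ t : T, Fv (Sum.inr (Sum.inr t)) = g t) ∧
  (∀ v : V, ∀ x ∈ outF V E T K tail sinkNode v,
    Fv x ∈ Submodule.span F (Fv '' (inF V E T K head srcNode v : Set (Fin K ⊕ E ⊕ T)))) ∧
  (∀ t : T, ∃ d : {x // x ∈ inF V E T K head srcNode (sinkNode t)} → F,
    ∀ X : Fin K → F, ∑ k, X k * g t k = ∑ e', (∑ k, X k * Fv e'.1 k) * d e')

/-- The network computation problem admits a scalar linear solution over `F`. -/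
def ScalarLinearSolvable (F V E T : Type) [Field F] [Fintype V] [DecidableEq V]
    [Fintype E] [DecidableEq E] [Fintype T] [DecidableEq T] (K : ℕ)
    (tail head : E → V) (srcNode : Fin K → V) (sinkNode : T → V)
    (g : T → Fin K → F) : Prop :=
  ∃ Fv : Fin K ⊕ E ⊕ T → Fin K → F,
    IsLinearCodeSolution F V E T K tail head srcNode sinkNode g Fv

open Matrix in
/-- Column rank as finrank of the span of the column set. -/
theorem colRank_eq_finrank_span' (F : Type) [Field F] {m n : ℕ}
    (Mat : Matrix (Fin m) (Fin n) F) (A : Finset (Fin n)) :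
    (Matrix.of fun (i : Fin m) (a : {x // x ∈ A}) => Mat i a.1).rank
      = Module.finrank F (Submodule.span F (Set.image (fun j i => Mat i j) (A : Set (Fin n)))) := by
  have h : Set.range ((Matrix.of fun (i : Fin m) (a : {x // x ∈ A}) => Mat i a.1)ᵀ)
      = Set.image (fun j i => Mat i j) (A : Set (Fin n)) := by
    ext w
    simp only [Set.mem_range, Set.mem_image, Finset.mem_coe]
    constructor
    · rintro ⟨a, rfl⟩; exact ⟨a.1, a.2, rfl⟩
    · rintro ⟨j, hj, rfl⟩; exact ⟨⟨j, hj⟩, rfl⟩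
  rw [Matrix.rank_eq_finrank_span_cols, ← h]; rfl

/-- If two nested column sets have equal column rank, every column of the larger set
lies in the span of the columns of the smaller set. -/
theorem col_mem_span' (F : Type) [Field F] {m n : ℕ}
    (Mat : Matrix (Fin m) (Fin n) F) {A B : Finset (Fin n)} (hAB : A ⊆ B)
    (h : (Matrix.of fun (i : Fin m) (a : {x // x ∈ A}) => Mat i a.1).rank
        = (Matrix.of fun (i : Fin m) (a : {x // x ∈ B}) => Mat i a.1).rank)
    {j : Fin n} (hj : j ∈ B) :
    (fun i => Mat i j) ∈
      Submodule.span F (Set.image (fun j i => Mat i j) (A : Set (Fin n))) := by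
  rw [colRank_eq_finrank_span', colRank_eq_finrank_span'] at h
  have hle : Submodule.span F (Set.image (fun j i => Mat i j) (A : Set (Fin n)))
      ≤ Submodule.span F (Set.image (fun j i => Mat i j) (B : Set (Fin n))) :=
    Submodule.span_mono (Set.image_mono (by exact_mod_cast hAB))
  have heq := Submodule.eq_of_le_of_finrank_eq hle h
  rw [heq]
  exact Submodule.subset_span ⟨j, hj, rfl⟩



/-- If the network of a network computation problem with linear
demands `g_t(X) = X·g_t` is matroidal with respect to a matroid `M` representable over
`F`, having a representation `Mat ∈ F^{m×n}` (with `K ≤ m`, `m ≤ n`, `rank(Mat) = m`)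
that satisfies (C1) in the columns assigned to the source messages and (C2) in the
columns assigned to the demands (under the network-matroid map `f`), then the problem
admits a scalar linear solution over `F`; indeed, assigning to each edge `x` the
truncation to the first `K` coordinates of the column `Mat_{φ(f(x))}` as its global
encoding vector yields, together with suitable linear decoders at the sinks, a scalar
linear solution satisfying every sink demand. -/

theorem statement2 (F V E T : Type) [Field F] [Fintype F] [Fintype V] [DecidableEq V]
    [Fintype E] [DecidableEq E] [Fintype T] [DecidableEq T] (K : ℕ)
    (tail head : E → V) (srcNode : Fin K → V) (sinkNode : T → V)
    (hacyc : EdgeAcyclic tail head) (g : T → Fin K → F)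
    (S : Type) (M : FinMatroid S) (m n : ℕ) (hKm : K ≤ m) (hmn : m ≤ n)
    (Mat : Matrix (Fin m) (Fin n) F) (hMrank : Mat.rank = m)
    (φ : S ≃ Fin n) (hrep : IsRepresentation F M Mat φ)
    (f : Fin K ⊕ E ⊕ T → S)
    (hf : IsNetworkMatroidMap F V E T K tail head srcNode sinkNode M f)
    (hC1 : ∀ (k : Fin K) (i : Fin m),
      Mat i (φ (f (Sum.inl k))) = if (i : ℕ) = (k : ℕ) then 1 else 0)
    (hC2 : ∀ (t : T) (i : Fin m),
      Mat i (φ (f (Sum.inr (Sum.inr t)))) = if h : (i : ℕ) < K then g t ⟨i, h⟩ else 0) :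
    ScalarLinearSolvable F V E T K tail head srcNode sinkNode g ∧
    IsLinearCodeSolution F V E T K tail head srcNode sinkNode g
      (fun x k => Mat (Fin.castLE hKm k) (φ (f x))) := by

  classical
  obtain ⟨hf1, hf2, hf3⟩ := hf
  set Fv : Fin K ⊕ E ⊕ T → Fin K → F :=
    fun x k => Mat (Fin.castLE hKm k) (φ (f x)) with hFvdef
  set π : (Fin m → F) →ₗ[F] (Fin K → F) := LinearMap.funLeft F F (Fin.castLE hKm) with hπdef
  -- (3) the span condition
  have key : ∀ v : V, ∀ x ∈ outF V E T K tail sinkNode v,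
      Fv x ∈ Submodule.span F (Fv '' (inF V E T K head srcNode v : Set (Fin K ⊕ E ⊕ T))) := by
    intro v x hx
    set In := inF V E T K head srcNode v with hIndef
    set Out := outF V E T K tail sinkNode v with hOutdef
    set A : Finset (Fin n) := (In.image f).image φ with hAdef
    set B : Finset (Fin n) := ((In ∪ Out).image f).image φ with hBdef
    have hAB : A ⊆ B :=
      Finset.image_subset_image (Finset.image_subset_image Finset.subset_union_left)
    have hrk : colRank F Mat A = colRank F Mat B := by
      rw [hAdef, hBdef, hrep, hrep, hf3 v]
    have hjB : φ (f x) ∈ B :=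
      Finset.mem_image_of_mem φ (Finset.mem_image_of_mem f (Finset.mem_union_right _ hx))
    have hcol := col_mem_span' F Mat hAB hrk hjB
    have hπmem := Submodule.apply_mem_span_image_of_mem_span
      (s := Set.image (fun j i => Mat i j) (A : Set (Fin n))) π hcol
    have himg : π '' (Set.image (fun j i => Mat i j) (A : Set (Fin n)))
        = Fv '' (In : Set (Fin K ⊕ E ⊕ T)) := by
      rw [Set.image_image]
      have hA : (A : Set (Fin n)) = (fun y => φ (f y)) '' (In : Set (Fin K ⊕ E ⊕ T)) := by
        rw [hAdef]
        simp [Finset.coe_image, Set.image_image]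
      rw [hA, Set.image_image]
      rfl
    rw [himg] at hπmem
    exact hπmem
  -- (1) source edges
  have c1 : ∀ k : Fin K, Fv (Sum.inl k) = fun j => if j = k then (1 : F) else 0 := by
    intro k; funext j
    show Mat (Fin.castLE hKm j) (φ (f (Sum.inl k))) = _
    rw [hC1]
    simp [Fin.ext_iff]
  -- (2) demand edges
  have c2 : ∀ t : T, Fv (Sum.inr (Sum.inr t)) = g t := by
    intro t; funext k
    show Mat (Fin.castLE hKm k) (φ (f (Sum.inr (Sum.inr t)))) = _
    have hk : ((Fin.castLE hKm k : Fin m) : ℕ) < K := by simpa using k.isLt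
    rw [hC2, dif_pos hk]
    exact congrArg (g t) (Fin.ext (by simp))
  -- (4) decoders
  have c4 : ∀ t : T, ∃ d : {x // x ∈ inF V E T K head srcNode (sinkNode t)} → F,
      ∀ X : Fin K → F, ∑ k, X k * g t k = ∑ e', (∑ k, X k * Fv e'.1 k) * d e' := by
    intro t
    set In := inF V E T K head srcNode (sinkNode t) with hIndef
    have hdm : (Sum.inr (Sum.inr t) : Fin K ⊕ E ⊕ T)
        ∈ outF V E T K tail sinkNode (sinkNode t) := by
      simp [outF]
    have hd := key (sinkNode t) _ hdm
    rw [c2 t] at hd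
    have hrange : Fv '' (In : Set (Fin K ⊕ E ⊕ T))
        = Set.range (fun e' : {x // x ∈ In} => Fv e'.1) := by
      ext w
      simp only [Set.mem_image, Set.mem_range, Finset.mem_coe, Subtype.exists]
      constructor
      · rintro ⟨y, hy, rfl⟩; exact ⟨y, hy, rfl⟩
      · rintro ⟨y, hy, rfl⟩; exact ⟨y, hy, rfl⟩
    rw [hrange, Submodule.mem_span_range_iff_exists_fun] at hd
    obtain ⟨c, hc⟩ := hd
    refine ⟨c, fun X => ?_⟩
    have hgk : ∀ k : Fin K, g t k = ∑ e' : {x // x ∈ In}, c e' * Fv e'.1 k := by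
      intro k
      have h := congrFun hc k
      simpa [Finset.sum_apply] using h.symm
    calc ∑ k, X k * g t k = ∑ k, ∑ e' : {x // x ∈ In}, X k * (c e' * Fv e'.1 k) := by
          simp only [hgk, Finset.mul_sum]
      _ = ∑ e' : {x // x ∈ In}, (∑ k, X k * Fv e'.1 k) * c e' := by
          rw [Finset.sum_comm]
          refine Finset.sum_congr rfl fun e' _ => ?_
          rw [Finset.sum_mul]
          exact Finset.sum_congr rfl fun k _ => by ring
  have hsol : IsLinearCodeSolution F V E T K tail head srcNode sinkNode g Fv :=
    ⟨c1, c2, key, c4⟩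
  exact ⟨⟨Fv, hsol⟩, hsol⟩
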